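/- Define q_j ∈ F_2[w_2, w_3] by q_0 = 1, q_{<0} = 0, q_j = w_2 q_{j−2} + w_3 q_{j−3}, and define r_j ∈ F_2[w_2, w_3] by r_0 = 1, r_{<0} = 0, r_{j+1} = w_2 r_j + w_3² r_{j−2}. Then for n ≥ 2^t − 1 and j = n − (2^t − 1), the relation r_{j−1} q_n + w_3 r_{j−2} q_{n−1} + r_j q_{n−2} = 0 holds. -/

import Mathlib

open MvPolynomial

/-- The polynomials `q j ∈ F₂[w₂,w₃]` (with `w₂ = X 0`, `w₃ = X 1`): `q 0 = 1`,
`q j = 0` for `j < 0`, and `q j = w₂ q (j-2) + w₃ q (j-3)`. -/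
noncomputable def q3 (j : ℤ) : MvPolynomial (Fin 2) (ZMod 2) :=
  if j < 0 then 0
  else if j = 0 then 1
  else X 0 * q3 (j - 2) + X 1 * q3 (j - 3)
termination_by j.toNat
decreasing_by all_goals omega

/-- The polynomials `r j ∈ F₂[w₂,w₃]`: `r 0 = 1`, `r j = 0` for `j < 0`, and
`r (j+1) = w₂ r j + w₃² r (j-2)`, i.e. `r j = w₂ r (j-1) + w₃² r (j-3)` for `j ≥ 1`. -/
noncomputable def r3 (j : ℤ) : MvPolynomial (Fin 2) (ZMod 2) :=
  if j < 0 then 0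
  else if j = 0 then 1
  else X 0 * r3 (j - 1) + (X 1) ^ 2 * r3 (j - 3)
termination_by j.toNat
decreasing_by all_goals omega

private lemma q3_neg {n : ℤ} (h : n < 0) : q3 n = 0 := by rw [q3, if_pos h]

private lemma q3_zero : q3 0 = 1 := by rw [q3]; norm_num

private lemma q3_rec {n : ℤ} (h : 1 ≤ n) :
    q3 n = X 0 * q3 (n - 2) + X 1 * q3 (n - 3) := by
  rw [q3, if_neg (by omega), if_neg (by omega)]

private lemma r3_neg {n : ℤ} (h : n < 0) : r3 n = 0 := by rw [r3, if_pos h]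

private lemma r3_zero : r3 0 = 1 := by rw [r3]; norm_num

private lemma r3_rec {n : ℤ} (h : 1 ≤ n) :
    r3 n = X 0 * r3 (n - 1) + (X 1) ^ 2 * r3 (n - 3) := by
  rw [r3, if_neg (by omega), if_neg (by omega)]

private lemma two_eq_zero' : (2 : MvPolynomial (Fin 2) (ZMod 2)) = 0 := by
  exact CharTwo.two_eq_zero

private lemma q3_double_aux : ∀ k : ℕ, ∀ n : ℤ, n ≤ (k : ℤ) →
    q3 (2 * n) = q3 n ^ 2 + X 0 * q3 (n - 1) ^ 2 ∧
      q3 (2 * n + 1) = X 1 * q3 (n - 1) ^ 2 := by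
  intro k
  induction k with
  | zero =>
    intro n hn
    rcases lt_or_eq_of_le hn with h | h
    · have h1 : n < 0 := by exact_mod_cast h
      rw [q3_neg (show 2 * n < 0 by omega), q3_neg (show 2 * n + 1 < 0 by omega),
        q3_neg (show n - 1 < 0 by omega), q3_neg h1]
      simp
    · have h0 : n = 0 := by exact_mod_cast h
      subst h0
      constructor
      · rw [show ((2:ℤ) * 0) = 0 by ring, q3_zero, q3_neg (by norm_num)]
        simp
      · rw [show ((2:ℤ) * 0 + 1) = 1 by ring, q3_rec (by norm_num),
          q3_neg (by norm_num), q3_neg (by norm_num), q3_neg (by norm_num)]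
        simp
  | succ k ih =>
    intro n hn
    rcases le_or_gt n (k : ℤ) with h | h
    · exact ih n h
    have hn1 : 1 ≤ n := by omega
    have h1 := ih (n - 1) (by omega)
    have h2 := ih (n - 2) (by omega)
    constructor
    · rw [q3_rec (show (1:ℤ) ≤ 2 * n by omega),
        show (2 * n - 2 : ℤ) = 2 * (n - 1) by ring,
        show (2 * n - 3 : ℤ) = 2 * (n - 2) + 1 by ring,
        h1.1, h2.2, q3_rec hn1,
        show (n - 1 - 1 : ℤ) = n - 2 by ring,
        show (n - 2 - 1 : ℤ) = n - 3 by ring]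
      linear_combination (-(X 0 * X 1 * q3 (n - 2) * q3 (n - 3))) * two_eq_zero'
    · rw [q3_rec (show (1:ℤ) ≤ 2 * n + 1 by omega),
        show (2 * n + 1 - 2 : ℤ) = 2 * (n - 1) + 1 by ring,
        show (2 * n + 1 - 3 : ℤ) = 2 * (n - 1) by ring,
        h1.2, h1.1,
        show (n - 1 - 1 : ℤ) = n - 2 by ring]
      linear_combination (X 0 * X 1 * q3 (n - 2) ^ 2) * two_eq_zero'

private lemma q3_double (n : ℤ) :
    q3 (2 * n) = q3 n ^ 2 + X 0 * q3 (n - 1) ^ 2 ∧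
      q3 (2 * n + 1) = X 1 * q3 (n - 1) ^ 2 :=
  q3_double_aux n.toNat n (Int.self_le_toNat n)

private lemma q3_pow_sub_three : ∀ t : ℕ, 2 ≤ t → q3 ((2 : ℤ) ^ t - 3) = 0 := by
  intro t ht
  induction t, ht using Nat.le_induction with
  | base =>
    rw [show ((2:ℤ) ^ 2 - 3) = 1 by norm_num, q3_rec (by norm_num),
      q3_neg (by norm_num), q3_neg (by norm_num)]
    simp
  | succ t ht ih =>
    rw [show ((2:ℤ) ^ (t + 1) - 3) = 2 * (2 ^ t - 2) + 1 by rw [pow_succ]; ring,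
      (q3_double _).2, show ((2:ℤ) ^ t - 2 - 1) = 2 ^ t - 3 by ring, ih]
    simp

private lemma step3 (j m : ℤ) (hj : 1 ≤ j) (hm : 1 ≤ m) :
    r3 (j - 1) * q3 m + X 1 * r3 (j - 2) * q3 (m - 1) + r3 j * q3 (m - 2) =
      X 1 * (r3 (j - 2) * q3 (m - 1) + X 1 * r3 (j - 3) * q3 (m - 2) +
        r3 (j - 1) * q3 (m - 3)) := by
  rw [q3_rec hm, r3_rec hj]
  linear_combination (X 0 * r3 (j - 1) * q3 (m - 2)) * two_eq_zero'

/-- **ascended relations, k = 3.** For `n ≥ 2^t − 1` and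
`j = n − (2^t − 1)`, the relation `r_{j−1} q_n + w₃ r_{j−2} q_{n−1} + r_j q_{n−2} = 0`
holds in `F₂[w₂,w₃]`. -/
theorem q3_ascended_relation (t : ℕ) (ht : 2 ≤ t) (n : ℤ) (hn : 2 ^ t - 1 ≤ n) :
    r3 (n - (2 ^ t - 1) - 1) * q3 n + X 1 * r3 (n - (2 ^ t - 1) - 2) * q3 (n - 1) +
      r3 (n - (2 ^ t - 1)) * q3 (n - 2) = 0 := by
  have hpow : (4 : ℤ) ≤ 2 ^ t := by
    calc (4 : ℤ) = 2 ^ 2 := by norm_num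
    _ ≤ 2 ^ t := pow_le_pow_right₀ (by norm_num) ht
  refine Int.le_induction (motive := fun n _ => r3 (n - (2 ^ t - 1) - 1) * q3 n +
    X 1 * r3 (n - (2 ^ t - 1) - 2) * q3 (n - 1) + r3 (n - (2 ^ t - 1)) * q3 (n - 2) = 0)
    ?_ ?_ n hn
  · show _ = (0 : MvPolynomial (Fin 2) (ZMod 2))
    rw [show ((2:ℤ) ^ t - 1 - (2 ^ t - 1) - 1) = -1 by ring,
      show ((2:ℤ) ^ t - 1 - (2 ^ t - 1) - 2) = -2 by ring,
      show ((2:ℤ) ^ t - 1 - (2 ^ t - 1)) = 0 by ring,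
      r3_neg (by norm_num), r3_neg (by norm_num), r3_zero,
      show ((2:ℤ) ^ t - 1 - 2) = 2 ^ t - 3 by ring,
      q3_pow_sub_three t ht]
    ring
  · intro n hn ih
    rw [step3 (n + 1 - (2 ^ t - 1)) (n + 1) (by omega) (by omega),
      show (n + 1 - (2 ^ t - 1) - 2 : ℤ) = n - (2 ^ t - 1) - 1 by ring,
      show (n + 1 - 1 : ℤ) = n by ring,
      show (n + 1 - (2 ^ t - 1) - 3 : ℤ) = n - (2 ^ t - 1) - 2 by ring,
      show (n + 1 - 2 : ℤ) = n - 1 by ring,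
      show (n + 1 - (2 ^ t - 1) - 1 : ℤ) = n - (2 ^ t - 1) by ring,
      show (n + 1 - 3 : ℤ) = n - 2 by ring,
      ih, mul_zero]
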